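/- Let K be a nonempty closed subset of ℝⁿ and pr a Borel measurable selection of the metric projection onto K. For every ξ ∈ ℝⁿ and σ² > 0, the degrees of freedom dominates the Stein degrees of freedom: (1/σ²) Σᵢ ∫_{ℝⁿ} prᵢ(y)(yᵢ − ξᵢ) ψ(y; ξ, σ²) dy ≥ ∫_{ℝⁿ} (Σᵢ ∂ᵢprᵢ(y)) ψ(y; ξ, σ²) dy, i.e. df − df_S ≥ 0. -/

import Mathlib

open MeasureTheory Metric Asymptotics Filter
open scoped Topology

/-- The density of the `N(ξ, σ² Iₙ)` distribution on `ℝⁿ`. -/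
noncomputable def gaussDensity (n : ℕ) (ξ : EuclideanSpace ℝ (Fin n)) (σ2 : ℝ)
    (y : EuclideanSpace ℝ (Fin n)) : ℝ :=
  (2 * Real.pi * σ2) ^ (-(n : ℝ) / 2) * Real.exp (-‖y - ξ‖ ^ 2 / (2 * σ2))

/-- The set of points whose metric projection onto `K` is unique. -/
def uniqSet (n : ℕ) (K : Set (EuclideanSpace ℝ (Fin n))) : Set (EuclideanSpace ℝ (Fin n)) :=
  {y | ∃! x, x ∈ K ∧ dist y x = infDist y K}

/-- Differentiability at `y` in the extended sense relative to `D`, with derivative `A`. -/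
def DiffExtended {n : ℕ} (D : Set (EuclideanSpace ℝ (Fin n)))
    (f : EuclideanSpace ℝ (Fin n) → EuclideanSpace ℝ (Fin n))
    (y : EuclideanSpace ℝ (Fin n))
    (A : EuclideanSpace ℝ (Fin n) →L[ℝ] EuclideanSpace ℝ (Fin n)) : Prop :=
  y ∈ D ∧ ∃ N ∈ 𝓝 y, volume (N \ D) = 0 ∧
    (fun x => f x - f y - A (x - y)) =o[𝓝[D ∩ N] y] fun x => x - y

/-!
A nearest-point selection is monotone, `0 ≤ ⟪pr a - pr b, a - b⟫`, so the coordinate difference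
quotients `(prᵢ(y + h eᵢ) - prᵢ(y)) / h` are nonnegative. Translating the integral moves the
difference quotient onto the Gaussian density, where it converges boundedly to
`(yᵢ - ξᵢ) / σ² · ψ`; hence the integrals of these nonnegative quotients against `ψ` tend to the
`i`-th summand of `df`. Along a sequence `h → 0⁺` the quotients converge a.e. to `∂ᵢprᵢ`, because
countably many translates of the conull set `uniqSet n K` are still conull, and Fatou's lemma
yields integrability of `∂ᵢprᵢ · ψ` together with the inequality.
-/

section NearestPoint

variable {V : Type*} [NormedAddCommGroup V] {K : Set V} {pr : V → V}

open RealInnerProductSpace in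
theorem inner_sub_sub_nonneg_of_nearest [InnerProductSpace ℝ V]
    (hsel : ∀ y, pr y ∈ K ∧ dist y (pr y) = infDist y K)
    (a b : V) : 0 ≤ ⟪pr a - pr b, a - b⟫ := by
  have nearest : ∀ y x, ‖y - pr y‖ ^ 2 ≤ ‖y - pr x‖ ^ 2 := fun y x => by
    gcongr
    rw [← dist_eq_norm, ← dist_eq_norm, (hsel y).2]
    exact infDist_le_dist_of_mem (hsel x).1
  have ha := nearest a b
  have hb := nearest b a
  rw [norm_sub_sq_real, norm_sub_sq_real] at ha hb
  simp only [inner_sub_right, real_inner_comm a, real_inner_comm b] at ha hb ⊢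
  linarith

theorem norm_le_of_nearest (hsel : ∀ y, pr y ∈ K ∧ dist y (pr y) = infDist y K) (y : V) :
    ‖pr y‖ ≤ ‖pr 0‖ + 2 * ‖y‖ := by
  have h : dist y (pr y) ≤ dist y (pr 0) := by
    rw [(hsel y).2]; exact infDist_le_dist_of_mem (hsel 0).1
  rw [dist_eq_norm, dist_eq_norm] at h
  calc ‖pr y‖ ≤ ‖y‖ + ‖y - pr y‖ := by simpa using norm_sub_le y (y - pr y)
    _ ≤ ‖y‖ + (‖y‖ + ‖pr 0‖) := by gcongr; exact h.trans (norm_sub_le _ _)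
    _ = ‖pr 0‖ + 2 * ‖y‖ := by ring

end NearestPoint

section NearestPointEuclidean

variable {n : ℕ} {K : Set (EuclideanSpace ℝ (Fin n))}
  {pr : EuclideanSpace ℝ (Fin n) → EuclideanSpace ℝ (Fin n)}

theorem apply_le_apply_add_smul_single_of_nearest
    (hsel : ∀ y, pr y ∈ K ∧ dist y (pr y) = infDist y K)
    (y : EuclideanSpace ℝ (Fin n)) (i : Fin n) {h : ℝ} (hh : 0 < h) :
    pr y i ≤ pr (y + h • EuclideanSpace.single i 1) i := by
  have hm := inner_sub_sub_nonneg_of_nearest hsel (y + h • EuclideanSpace.single i 1) y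
  rw [add_sub_cancel_left, real_inner_smul_right, EuclideanSpace.inner_single_right] at hm
  simp only [one_mul, PiLp.sub_apply, map_sub, conj_trivial] at hm
  linarith [(mul_nonneg_iff_of_pos_left hh).1 hm]

theorem abs_apply_le_of_nearest (hsel : ∀ y, pr y ∈ K ∧ dist y (pr y) = infDist y K)
    (y : EuclideanSpace ℝ (Fin n)) (i : Fin n) : |pr y i| ≤ ‖pr 0‖ + 2 * ‖y‖ :=
  (PiLp.norm_apply_le (pr y) i).trans (norm_le_of_nearest hsel y)

end NearestPointEuclidean

section GaussianBounds

theorem one_add_sq_mul_exp_le {ε : ℝ} (hε : 0 < ε) (r : ℝ) :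
    (1 + r) ^ 2 * Real.exp (-ε * r ^ 2) ≤ (2 + 4 / ε) * Real.exp (-(ε / 2) * r ^ 2) := by
  have hexp : 1 + ε / 2 * r ^ 2 ≤ Real.exp (ε / 2 * r ^ 2) := by
    linarith [Real.add_one_le_exp (ε / 2 * r ^ 2)]
  have hpoly : (1 + r) ^ 2 ≤ (2 + 4 / ε) * Real.exp (ε / 2 * r ^ 2) := by
    have h4 : (2 + 4 / ε) * (1 + ε / 2 * r ^ 2) = 2 + 4 / ε + (ε + 2) * r ^ 2 := by
      field_simp; ring
    nlinarith [sq_nonneg (1 - r), sq_nonneg r, mul_le_mul_of_nonneg_left hexp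
      (by positivity : (0 : ℝ) ≤ 2 + 4 / ε), div_pos four_pos hε]
  calc (1 + r) ^ 2 * Real.exp (-ε * r ^ 2)
      ≤ (2 + 4 / ε) * Real.exp (ε / 2 * r ^ 2) * Real.exp (-ε * r ^ 2) := by gcongr
    _ = (2 + 4 / ε) * Real.exp (-(ε / 2) * r ^ 2) := by
      rw [mul_assoc, ← Real.exp_add]; ring_nf

variable {V : Type*} [NormedAddCommGroup V] [InnerProductSpace ℝ V] [FiniteDimensional ℝ V]
  [MeasurableSpace V] [BorelSpace V]

theorem integrable_exp_neg_mul_sq_norm {ε : ℝ} (hε : 0 < ε) :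
    Integrable (fun v : V => Real.exp (-ε * ‖v‖ ^ 2)) := by
  refine (GaussianFourier.integrable_cexp_neg_mul_sq_norm_add (V := V) (b := ε)
    (by simpa using hε) 0 0).norm.congr (.of_forall fun v => ?_)
  simp [Complex.norm_exp, ← Complex.ofReal_pow]

theorem integrable_one_add_norm_sub_sq_mul_exp {ε : ℝ} (hε : 0 < ε) (ξ : V) :
    Integrable (fun v : V => (1 + ‖v - ξ‖) ^ 2 * Real.exp (-ε * ‖v - ξ‖ ^ 2)) := by
  refine Integrable.mono' (((integrable_exp_neg_mul_sq_norm (half_pos hε)).comp_sub_right ξ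
    ).const_mul (2 + 4 / ε)) (by fun_prop) (.of_forall fun v => ?_)
  rw [Real.norm_of_nonneg (by positivity)]
  exact one_add_sq_mul_exp_le hε _

end GaussianBounds

theorem add_mul_norm_le_mul_one_add_norm_sub {E : Type*} [SeminormedAddCommGroup E]
    (a b : ℝ) (y ξ : E) : a + b * ‖y‖ ≤ (|a| + |b| * (‖ξ‖ + 1)) * (1 + ‖y - ξ‖) := by
  have hy : ‖y‖ ≤ ‖ξ‖ + ‖y - ξ‖ := by simpa using norm_add_le ξ (y - ξ)
  calc a + b * ‖y‖ ≤ |a| + |b| * ‖y‖ := by gcongr; exacts [le_abs_self a, le_abs_self b]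
    _ ≤ _ := by
      nlinarith [mul_le_mul_of_nonneg_left hy (abs_nonneg b), abs_nonneg b,
        mul_nonneg (abs_nonneg a) (norm_nonneg (y - ξ)),
        mul_nonneg (mul_nonneg (abs_nonneg b) (norm_nonneg ξ)) (norm_nonneg (y - ξ))]

theorem abs_comp_add_le {E : Type*} [SeminormedAddCommGroup E] {f : E → ℝ} {a b : ℝ}
    (hfab : ∀ y, |f y| ≤ a + b * ‖y‖) (w y : E) :
    |f (y + w)| ≤ (a + |b| * ‖w‖) + |b| * ‖y‖ := by
  have := norm_add_le y w
  have := hfab (y + w)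
  nlinarith [le_abs_self b, abs_nonneg b, norm_nonneg (y + w)]

section GaussDensity

variable {n : ℕ} {ξ : EuclideanSpace ℝ (Fin n)} {σ2 : ℝ}

theorem gaussDensity_pos (hσ2 : 0 < σ2) (y : EuclideanSpace ℝ (Fin n)) :
    0 < gaussDensity n ξ σ2 y := by
  unfold gaussDensity; positivity

theorem continuous_gaussDensity : Continuous (gaussDensity n ξ σ2) := by
  unfold gaussDensity; fun_prop

theorem gaussDensity_sub (y v : EuclideanSpace ℝ (Fin n)) :
    gaussDensity n ξ σ2 (y - v) = gaussDensity n (ξ + v) σ2 y := by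
  simp only [gaussDensity, sub_sub, add_comm v]

theorem integrable_mul_gaussDensity (hσ2 : 0 < σ2) {f : EuclideanSpace ℝ (Fin n) → ℝ}
    (hf : AEStronglyMeasurable f) {a b : ℝ} (hfab : ∀ y, |f y| ≤ a + b * ‖y‖) :
    Integrable (fun y => f y * gaussDensity n ξ σ2 y) := by
  set M := |a| + |b| * (‖ξ‖ + 1)
  refine Integrable.mono' ((integrable_one_add_norm_sub_sq_mul_exp
    (by positivity : 0 < 1 / (2 * σ2)) ξ).const_mul (M * (2 * Real.pi * σ2) ^ (-(n : ℝ) / 2)))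
    (hf.mul continuous_gaussDensity.aestronglyMeasurable) (.of_forall fun y => ?_)
  have hgrowth : |f y| ≤ M * (1 + ‖y - ξ‖) ^ 2 :=
    (hfab y).trans <| (add_mul_norm_le_mul_one_add_norm_sub a b y ξ).trans <| by
      gcongr
      exact le_self_pow₀ (by simp) two_ne_zero
  rw [norm_mul, Real.norm_eq_abs, Real.norm_of_nonneg (gaussDensity_pos hσ2 y).le]
  calc |f y| * gaussDensity n ξ σ2 y ≤ M * (1 + ‖y - ξ‖) ^ 2 * gaussDensity n ξ σ2 y := by
        gcongr; exact (gaussDensity_pos hσ2 y).le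
    _ = _ := by unfold gaussDensity; ring_nf

theorem integral_sub_mul_gaussDensity_eq (hσ2 : 0 < σ2) {f : EuclideanSpace ℝ (Fin n) → ℝ}
    (hf : Measurable f) {a b : ℝ} (hfab : ∀ y, |f y| ≤ a + b * ‖y‖) (w : EuclideanSpace ℝ (Fin n)) :
    ∫ y, (f (y + w) - f y) * gaussDensity n ξ σ2 y =
      ∫ y, f y * (gaussDensity n ξ σ2 (y - w) - gaussDensity n ξ σ2 y) := by
  have hint := integrable_mul_gaussDensity (ξ := ξ) hσ2 hf.aestronglyMeasurable hfab
  have hint_shift := integrable_mul_gaussDensity (ξ := ξ) (f := fun y => f (y + w)) hσ2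
    (hf.comp (measurable_add_const w)).aestronglyMeasurable (abs_comp_add_le hfab w)
  have hint_center := integrable_mul_gaussDensity (ξ := ξ + w) hσ2 hf.aestronglyMeasurable hfab
  simp_rw [← gaussDensity_sub] at hint_center
  simp_rw [sub_mul, mul_sub]
  rw [integral_sub hint_shift hint, integral_sub hint_center hint,
    ← integral_add_right_eq_self (fun y => f y * gaussDensity n ξ σ2 (y - w)) w]
  simp only [add_sub_cancel_right]

open RealInnerProductSpace

theorem hasDerivAt_gaussDensity_sub_smul (y v : EuclideanSpace ℝ (Fin n)) (t : ℝ) :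
    HasDerivAt (fun t : ℝ => gaussDensity n ξ σ2 (y - t • v))
      (⟪y - t • v - ξ, v⟫ / σ2 * gaussDensity n ξ σ2 (y - t • v)) t := by
  have hline : HasDerivAt (fun t : ℝ => y - t • v - ξ) (-v) t := by
    simpa using (((hasDerivAt_id t).smul_const v).const_sub y).sub_const ξ
  refine (((hline.norm_sq.neg.div_const (2 * σ2)).exp).const_mul
    ((2 * Real.pi * σ2) ^ (-(n : ℝ) / 2))).congr_deriv ?_
  simp only [gaussDensity, Pi.neg_apply, inner_neg_right]
  field_simp

theorem gaussDensity_sub_le {y w : EuclideanSpace ℝ (Fin n)} (hσ2 : 0 < σ2) (hw : ‖w‖ ≤ 1) :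
    gaussDensity n ξ σ2 (y - w) ≤ (2 * Real.pi * σ2) ^ (-(n : ℝ) / 2) * Real.exp (1 / (2 * σ2)) *
      Real.exp (-(1 / (4 * σ2)) * ‖y - ξ‖ ^ 2) := by
  have hsq : ‖y - ξ‖ ^ 2 / 2 - 1 ≤ ‖y - w - ξ‖ ^ 2 := by
    have htri : ‖y - ξ‖ ≤ ‖y - w - ξ‖ + ‖w‖ := by
      simpa [sub_right_comm] using norm_add_le (y - w - ξ) w
    nlinarith [pow_le_pow_left₀ (norm_nonneg _) htri 2,
      mul_le_mul hw hw (norm_nonneg w) zero_le_one,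
      sq_nonneg (‖y - w - ξ‖ - ‖w‖)]
  rw [gaussDensity, mul_assoc _ (Real.exp _), ← Real.exp_add]
  gcongr
  calc -‖y - w - ξ‖ ^ 2 / (2 * σ2) ≤ -(‖y - ξ‖ ^ 2 / 2 - 1) / (2 * σ2) := by gcongr
    _ = 1 / (2 * σ2) + -(1 / (4 * σ2)) * ‖y - ξ‖ ^ 2 := by ring

theorem abs_gaussDensity_sub_smul_sub_le (hσ2 : 0 < σ2) :
    ∃ K, ∀ (y v : EuclideanSpace ℝ (Fin n)), ‖v‖ ≤ 1 → ∀ h : ℝ, 0 ≤ h → h ≤ 1 →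
      |gaussDensity n ξ σ2 (y - h • v) - gaussDensity n ξ σ2 y| ≤
        h * (K * ((1 + ‖y - ξ‖) * Real.exp (-(1 / (4 * σ2)) * ‖y - ξ‖ ^ 2))) := by
  refine ⟨(2 * Real.pi * σ2) ^ (-(n : ℝ) / 2) * Real.exp (1 / (2 * σ2)) / σ2,
    fun y v hv h hh0 hh1 => ?_⟩
  have hderiv_le : ∀ t ∈ Set.Ico 0 h,
      ‖⟪y - t • v - ξ, v⟫ / σ2 * gaussDensity n ξ σ2 (y - t • v)‖ ≤
        (2 * Real.pi * σ2) ^ (-(n : ℝ) / 2) * Real.exp (1 / (2 * σ2)) / σ2 *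
          ((1 + ‖y - ξ‖) * Real.exp (-(1 / (4 * σ2)) * ‖y - ξ‖ ^ 2)) := by
    rintro t ⟨ht0, hth⟩
    have htv : ‖t • v‖ ≤ 1 := by
      rw [norm_smul, Real.norm_of_nonneg ht0]
      nlinarith [norm_nonneg v]
    have hinner : |⟪y - t • v - ξ, v⟫| ≤ 1 + ‖y - ξ‖ := by
      calc |⟪y - t • v - ξ, v⟫| ≤ ‖y - t • v - ξ‖ * ‖v‖ := abs_real_inner_le_norm _ _
        _ ≤ ‖y - t • v - ξ‖ * 1 := by gcongr
        _ ≤ 1 + ‖y - ξ‖ := by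
          rw [mul_one, sub_right_comm]
          linarith [norm_sub_le (y - ξ) (t • v)]
    rw [norm_mul, Real.norm_of_nonneg (gaussDensity_pos hσ2 _).le, Real.norm_eq_abs, abs_div,
      abs_of_pos hσ2]
    calc |⟪y - t • v - ξ, v⟫| / σ2 * gaussDensity n ξ σ2 (y - t • v)
        ≤ (1 + ‖y - ξ‖) / σ2 * ((2 * Real.pi * σ2) ^ (-(n : ℝ) / 2) *
            Real.exp (1 / (2 * σ2)) * Real.exp (-(1 / (4 * σ2)) * ‖y - ξ‖ ^ 2)) :=
          mul_le_mul (by gcongr) (gaussDensity_sub_le hσ2 htv) (gaussDensity_pos hσ2 _).le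
            (by positivity)
      _ = _ := by ring
  have hmvt := norm_image_sub_le_of_norm_deriv_le_segment'
    (fun t _ => (hasDerivAt_gaussDensity_sub_smul (ξ := ξ) (σ2 := σ2) y v t).hasDerivWithinAt)
    hderiv_le h ⟨hh0, le_rfl⟩
  simpa [Real.norm_eq_abs, mul_comm h] using hmvt

theorem tendsto_integral_mul_slope_gaussDensity (hσ2 : 0 < σ2)
    {f : EuclideanSpace ℝ (Fin n) → ℝ} (hf : AEStronglyMeasurable f) {a b : ℝ}
    (hfab : ∀ y, |f y| ≤ a + b * ‖y‖) {v : EuclideanSpace ℝ (Fin n)} (hv : ‖v‖ ≤ 1) :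
    Tendsto
      (fun t : ℝ => ∫ y, f y * ((gaussDensity n ξ σ2 (y - t • v) - gaussDensity n ξ σ2 y) / t))
      (𝓝[>] 0) (𝓝 (∫ y, f y * (⟪y - ξ, v⟫ / σ2 * gaussDensity n ξ σ2 y))) := by
  obtain ⟨K, hK⟩ := abs_gaussDensity_sub_smul_sub_le (ξ := ξ) hσ2
  set M := |a| + |b| * (‖ξ‖ + 1)
  have hdom : Integrable fun y => M * (1 + ‖y - ξ‖) * (K * ((1 + ‖y - ξ‖) *
      Real.exp (-(1 / (4 * σ2)) * ‖y - ξ‖ ^ 2))) :=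
    ((integrable_one_add_norm_sub_sq_mul_exp (by positivity : 0 < 1 / (4 * σ2)) ξ).const_mul
      (M * K)).congr (.of_forall fun y => by ring)
  refine tendsto_integral_filter_of_dominated_convergence _ ?_ ?_ hdom (.of_forall fun y => ?_)
  · exact .of_forall fun t => hf.mul <| (((continuous_gaussDensity.comp
      (continuous_id.sub continuous_const)).sub continuous_gaussDensity).div_const t
      ).aestronglyMeasurable
  · filter_upwards [Ioo_mem_nhdsGT one_pos] with t ht
    refine .of_forall fun y => ?_
    rw [norm_mul, Real.norm_eq_abs, Real.norm_eq_abs, abs_div, abs_of_pos ht.1]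
    have hf_le := (hfab y).trans (add_mul_norm_le_mul_one_add_norm_sub a b y ξ)
    have hslope_le : |gaussDensity n ξ σ2 (y - t • v) - gaussDensity n ξ σ2 y| / t ≤
        K * ((1 + ‖y - ξ‖) * Real.exp (-(1 / (4 * σ2)) * ‖y - ξ‖ ^ 2)) := by
      rw [div_le_iff₀' ht.1]
      exact hK y v hv t ht.1.le ht.2.le
    exact mul_le_mul hf_le hslope_le (div_nonneg (abs_nonneg _) ht.1.le)
      ((abs_nonneg _).trans hf_le)
  · have hslope := hasDerivAt_iff_tendsto_slope.1
      (hasDerivAt_gaussDensity_sub_smul (ξ := ξ) (σ2 := σ2) y v 0)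
    simp only [zero_smul, sub_zero] at hslope
    refine ((hslope.mono_left (nhdsWithin_mono _ fun t ht => ne_of_gt ht)).congr
      fun t => ?_).const_mul (f y)
    simp [slope_def_field]

end GaussDensity

theorem integrable_and_integral_le_of_tendsto {α ι : Type*} [MeasurableSpace α] {μ : Measure α}
    {l : Filter ι} [l.NeBot] [l.IsCountablyGenerated] {Q : ι → α → ℝ} {F : α → ℝ} {L : ℝ}
    (hQ : ∀ k, Integrable (Q k) μ) (hQ_nonneg : ∀ k x, 0 ≤ Q k x)
    (hF : ∀ᵐ x ∂μ, Tendsto (fun k => Q k x) l (𝓝 (F x)))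
    (hL : Tendsto (fun k => ∫ x, Q k x ∂μ) l (𝓝 L)) :
    Integrable F μ ∧ ∫ x, F x ∂μ ≤ L := by
  have hF_meas : AEStronglyMeasurable F μ :=
    aestronglyMeasurable_of_tendsto_ae l (fun k => (hQ k).1) hF
  have hF_nonneg : 0 ≤ᵐ[μ] F := by
    filter_upwards [hF] with x hx
    exact ge_of_tendsto' hx fun k => hQ_nonneg k x
  have hL_nonneg : 0 ≤ L := ge_of_tendsto' hL fun k => integral_nonneg (hQ_nonneg k)
  have hfatou : ∫⁻ x, ENNReal.ofReal (F x) ∂μ ≤ ENNReal.ofReal L :=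
    calc ∫⁻ x, ENNReal.ofReal (F x) ∂μ
        = ∫⁻ x, liminf (fun k => ENNReal.ofReal (Q k x)) l ∂μ := by
          refine lintegral_congr_ae ?_
          filter_upwards [hF] with x hx
          exact ((ENNReal.continuous_ofReal.tendsto _).comp hx).liminf_eq.symm
      _ ≤ liminf (fun k => ∫⁻ x, ENNReal.ofReal (Q k x) ∂μ) l :=
          lintegral_liminf_le' fun k => (hQ k).1.aemeasurable.ennreal_ofReal
      _ = ENNReal.ofReal L := by
          refine Tendsto.liminf_eq ?_
          simp_rw [← ofReal_integral_eq_lintegral_ofReal (hQ _) (.of_forall (hQ_nonneg _))]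
          exact (ENNReal.continuous_ofReal.tendsto L).comp hL
  refine ⟨⟨hF_meas, (hasFiniteIntegral_iff_ofReal hF_nonneg).2
    (hfatou.trans_lt ENNReal.ofReal_lt_top)⟩, ?_⟩
  rw [integral_eq_lintegral_of_nonneg_ae hF_nonneg hF_meas]
  exact ENNReal.toReal_le_of_le_ofReal hL_nonneg hfatou

theorem ae_forall_add_mem {G ι : Type*} [MeasurableSpace G] [AddGroup G] [MeasurableAdd G]
    [Countable ι] {μ : Measure G} [μ.IsAddRightInvariant] {D : Set G} (hD : ∀ᵐ y ∂μ, y ∈ D)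
    (w : ι → G) : ∀ᵐ y ∂μ, ∀ k, y + w k ∈ D :=
  ae_all_iff.2 fun k => (measurePreserving_add_right μ (w k)).quasiMeasurePreserving.ae hD

theorem DiffExtended.tendsto_slope {n : ℕ} {D : Set (EuclideanSpace ℝ (Fin n))}
    {f : EuclideanSpace ℝ (Fin n) → EuclideanSpace ℝ (Fin n)} {y : EuclideanSpace ℝ (Fin n)}
    {B : EuclideanSpace ℝ (Fin n) →L[ℝ] EuclideanSpace ℝ (Fin n)} (hf : DiffExtended D f y B)
    (v : EuclideanSpace ℝ (Fin n)) {h : ℕ → ℝ} (hlim : Tendsto h atTop (𝓝[≠] 0))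
    (hmem : ∀ k, y + h k • v ∈ D) :
    Tendsto (fun k => (h k)⁻¹ • (f (y + h k • v) - f y)) atTop (𝓝 (B v)) := by
  obtain ⟨-, N, hN, -, hlo⟩ := hf
  set line : ℝ → EuclideanSpace ℝ (Fin n) := fun t => y + t • v
  have hline : HasDerivAt line v 0 :=
    (((hasDerivAt_id (0 : ℝ)).smul_const v).const_add y).congr_deriv (one_smul ℝ v)
  have hline0 : line 0 = y := by simp [line]
  have hderiv := (HasFDerivWithinAt.of_isLittleO hlo).comp_hasDerivWithinAt_of_eq 0
    hline.hasDerivWithinAt (Set.mapsTo_preimage line _) hline0.symm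
  have hlim_line : Tendsto h atTop (𝓝[line ⁻¹' (D ∩ N) \ {0}] 0) := by
    have hline_tendsto : Tendsto (line ∘ h) atTop (𝓝 y) :=
      hline0 ▸ hline.continuousAt.tendsto.comp (tendsto_nhdsWithin_iff.1 hlim).1
    refine tendsto_nhdsWithin_iff.2 ⟨(tendsto_nhdsWithin_iff.1 hlim).1, ?_⟩
    filter_upwards [hline_tendsto.eventually_mem hN, (tendsto_nhdsWithin_iff.1 hlim).2]
      with k hkN hk0
    exact ⟨⟨hmem k, hkN⟩, hk0⟩
  refine ((hasDerivWithinAt_iff_tendsto_slope.1 hderiv).comp hlim_line).congr fun k => ?_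
  simp [slope_def_module, line]

theorem integrable_and_integral_apply_single_mul_gaussDensity_le {n : ℕ}
    {K : Set (EuclideanSpace ℝ (Fin n))} {pr : EuclideanSpace ℝ (Fin n) → EuclideanSpace ℝ (Fin n)}
    (hmeas : Measurable pr) (hsel : ∀ y, pr y ∈ K ∧ dist y (pr y) = infDist y K)
    {A : EuclideanSpace ℝ (Fin n) → (EuclideanSpace ℝ (Fin n) →L[ℝ] EuclideanSpace ℝ (Fin n))}
    (hA : ∀ᵐ y, DiffExtended (uniqSet n K) pr y (A y))
    (ξ : EuclideanSpace ℝ (Fin n)) {σ2 : ℝ} (hσ2 : 0 < σ2) (i : Fin n) :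
    Integrable (fun y => A y (EuclideanSpace.single i 1) i * gaussDensity n ξ σ2 y) ∧
      ∫ y, A y (EuclideanSpace.single i 1) i * gaussDensity n ξ σ2 y ≤
        (1 / σ2) * ∫ y, pr y i * (y i - ξ i) * gaussDensity n ξ σ2 y := by
  set e : EuclideanSpace ℝ (Fin n) := EuclideanSpace.single i 1
  set ψ := gaussDensity n ξ σ2
  set h : ℕ → ℝ := fun k => 1 / (k + 1)
  have hpos : ∀ k, 0 < h k := fun k => by positivity
  have hlim : Tendsto h atTop (𝓝[>] 0) :=
    tendsto_nhdsWithin_iff.2 ⟨tendsto_one_div_add_atTop_nhds_zero_nat, .of_forall hpos⟩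
  have hpr_meas : Measurable fun y => pr y i := by fun_prop
  have hgrowth := fun y => abs_apply_le_of_nearest hsel y i
  set Q : ℕ → EuclideanSpace ℝ (Fin n) → ℝ := fun k y => (pr (y + h k • e) i - pr y i) / h k * ψ y
  have hQ_int : ∀ k, Integrable (Q k) := fun k =>
    (((integrable_mul_gaussDensity (f := fun y => pr (y + h k • e) i) hσ2
      (hpr_meas.comp (measurable_add_const _)).aestronglyMeasurable
      (abs_comp_add_le hgrowth _)).sub
      (integrable_mul_gaussDensity hσ2 hpr_meas.aestronglyMeasurable hgrowth)).div_const
      (h k)).congr (.of_forall fun y => by simp only [Q, ψ, Pi.sub_apply]; ring)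
  have hQ_nonneg : ∀ k y, 0 ≤ Q k y := fun k y =>
    mul_nonneg (div_nonneg (sub_nonneg.2 (apply_le_apply_add_smul_single_of_nearest hsel y i
      (hpos k))) (hpos k).le) (gaussDensity_pos hσ2 y).le
  have hQ_lim : Tendsto (fun k => ∫ y, Q k y) atTop
      (𝓝 ((1 / σ2) * ∫ y, pr y i * (y i - ξ i) * ψ y)) := by
    have hdct := (tendsto_integral_mul_slope_gaussDensity (ξ := ξ) hσ2
      hpr_meas.aestronglyMeasurable hgrowth (v := e) (by simp [e])).comp hlim
    convert hdct using 2 with k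
    · simp only [Q, Function.comp_apply, div_mul_eq_mul_div, mul_div_assoc', integral_div]
      rw [integral_sub_mul_gaussDensity_eq hσ2 hpr_meas hgrowth]
    · rw [← integral_const_mul]
      congr 1 with y
      simp only [e, ψ, EuclideanSpace.inner_single_right, PiLp.sub_apply, conj_trivial]
      ring
  have hQ_ae : ∀ᵐ y, Tendsto (fun k => Q k y) atTop (𝓝 (A y e i * ψ y)) := by
    filter_upwards [hA, ae_forall_add_mem (hA.mono fun y hy => hy.1) fun k => h k • e]
      with y hy hmem
    have hslope := ((EuclideanSpace.proj i).continuous.tendsto _).comp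
      (hy.tendsto_slope e (hlim.mono_right (nhdsWithin_mono _ fun t ht => ne_of_gt ht)) hmem)
    refine (hslope.mul_const (ψ y)).congr fun k => ?_
    simp [Q, div_eq_inv_mul]
  exact integrable_and_integral_le_of_tendsto hQ_int hQ_nonneg hQ_ae hQ_lim

theorem dfS_le_df_general
    (n : ℕ) (K : Set (EuclideanSpace ℝ (Fin n)))
    (pr : EuclideanSpace ℝ (Fin n) → EuclideanSpace ℝ (Fin n))
    (hmeas : Measurable pr)
    (hsel : ∀ y, pr y ∈ K ∧ dist y (pr y) = infDist y K)
    (A : EuclideanSpace ℝ (Fin n) →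
        (EuclideanSpace ℝ (Fin n) →L[ℝ] EuclideanSpace ℝ (Fin n)))
    (hA : ∀ᵐ y ∂(volume : Measure (EuclideanSpace ℝ (Fin n))),
        DiffExtended (uniqSet n K) pr y (A y))
    (ξ : EuclideanSpace ℝ (Fin n)) (σ2 : ℝ) (hσ2 : 0 < σ2) :
    (∫ y, (∑ i : Fin n, A y (EuclideanSpace.single i 1) i) * gaussDensity n ξ σ2 y) ≤
      (1 / σ2) * ∑ i : Fin n, ∫ y, pr y i * (y i - ξ i) * gaussDensity n ξ σ2 y := by
  have hcoord := integrable_and_integral_apply_single_mul_gaussDensity_le hmeas hsel hA ξ hσ2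
  simp_rw [Finset.sum_mul]
  rw [integral_finsetSum _ fun i _ => (hcoord i).1, Finset.mul_sum]
  exact Finset.sum_le_sum fun i _ => (hcoord i).2

/-- **The degrees of freedom dominates the Stein degrees of freedom: df ≥ df_S.**
For any Borel measurable selection `pr` of the metric projection onto a nonempty closed
`K ⊆ ℝⁿ`, any a.e. defined extended-sense derivative `A` of `pr`, any `ξ ∈ ℝⁿ` and `σ² > 0`:
`∫ (Σᵢ ∂ᵢprᵢ(y)) ψ(y; ξ, σ²) dy ≤ (1/σ²) Σᵢ ∫ prᵢ(y)(yᵢ - ξᵢ) ψ(y; ξ, σ²) dy`. -/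
theorem dfS_le_df
    (n : ℕ) (K : Set (EuclideanSpace ℝ (Fin n)))
    (hne : K.Nonempty) (hcl : IsClosed K)
    (pr : EuclideanSpace ℝ (Fin n) → EuclideanSpace ℝ (Fin n))
    (hmeas : Measurable pr)
    (hsel : ∀ y, pr y ∈ K ∧ dist y (pr y) = infDist y K)
    (A : EuclideanSpace ℝ (Fin n) →
        (EuclideanSpace ℝ (Fin n) →L[ℝ] EuclideanSpace ℝ (Fin n)))
    (hA : ∀ᵐ y ∂(volume : Measure (EuclideanSpace ℝ (Fin n))),
        DiffExtended (uniqSet n K) pr y (A y))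
    (ξ : EuclideanSpace ℝ (Fin n)) (σ2 : ℝ) (hσ2 : 0 < σ2) :
    (∫ y, (∑ i : Fin n, A y (EuclideanSpace.single i 1) i) * gaussDensity n ξ σ2 y) ≤
      (1 / σ2) * ∑ i : Fin n, ∫ y, pr y i * (y i - ξ i) * gaussDensity n ξ σ2 y :=
  dfS_le_df_general n K pr hmeas hsel A hA ξ σ2 hσ2
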